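/- arXiv:0811.0699 — 2 statements merged into one kernel-verified Lean document; each statement's English description precedes it below -/
import Mathlib

section
/- For every Boolean function f : {0,1}^n → {0,1}, the inversion complexity of f in formulas equals the decrease of f; that is, the minimum number of NOT operators over all Boolean formulas computing f is exactly d(f). -/
namespace InversionComplexity

open Classical

/-- A chain is a strictly increasing sequence of Boolean vectors in `{0,1}^n`
(pointwise order on `Fin n → Bool`). -/
def IsChain {n : ℕ} (X : List (Fin n → Bool)) : Prop :=
  X.Chain' (· < ·)

/-- The decrease `d_X(f)` of `f` on a sequence `X`: the number of consecutive
indices `i` with `f (x^i) = 1` and `f (x^{i+1}) = 0`. -/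
def decOn {n : ℕ} (f : (Fin n → Bool) → Bool) : List (Fin n → Bool) → ℕ
  | a :: b :: t => (if f a = true ∧ f b = false then 1 else 0) + decOn f (b :: t)
  | _ => 0

/-- The decrease `d(f)` of `f`: the maximum of `d_X(f)` over all chains `X`. -/
noncomputable def dec {n : ℕ} (f : (Fin n → Bool) → Bool) : ℕ :=
  sSup { m | ∃ X : List (Fin n → Bool), IsChain X ∧ decOn f X = m }

/-- Boolean formulas: finite trees built from variable leaves, constant leaves,
binary AND/OR nodes and unary NOT nodes. -/
inductive Formula (n : ℕ) : Type
  | var : Fin n → Formula n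
  | const : Bool → Formula n
  | and : Formula n → Formula n → Formula n
  | or : Formula n → Formula n → Formula n
  | not : Formula n → Formula n

/-- Evaluation of a formula on an input. -/
def Formula.eval {n : ℕ} (x : Fin n → Bool) : Formula n → Bool
  | .var i => x i
  | .const b => b
  | .and C D => C.eval x && D.eval x
  | .or C D => C.eval x || D.eval x
  | .not C => !(C.eval x)

/-- `not(C)`: the number of NOT nodes of a formula. -/
def Formula.notCount {n : ℕ} : Formula n → ℕ
  | .var _ => 0
  | .const _ => 0
  | .and C D => C.notCount + D.notCount
  | .or C D => C.notCount + D.notCount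
  | .not C => C.notCount + 1

/-- `not_d(C, x)`: the number of NOT nodes of `C` in the *down* state on input `x`,
i.e. whose input subformula evaluates to `1`. -/
def Formula.notDown {n : ℕ} (x : Fin n → Bool) : Formula n → ℕ
  | .var _ => 0
  | .const _ => 0
  | .and C D => C.notDown x + D.notDown x
  | .or C D => C.notDown x + D.notDown x
  | .not C => C.notDown x + (if C.eval x = true then 1 else 0)

/-- A formula computes a Boolean function `f` if it evaluates to `f x` on every input `x`. -/
def Formula.Computes {n : ℕ} (C : Formula n) (f : (Fin n → Bool) → Bool) : Prop :=
  ∀ x, C.eval x = f x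

/-- `I_f(f)`: the inversion complexity of `f` in formulas, the minimum number of
NOT nodes over all formulas computing `f`. -/
noncomputable def invFormula {n : ℕ} (f : (Fin n → Bool) → Bool) : ℕ :=
  sInf { k | ∃ C : Formula n, C.Computes f ∧ C.notCount = k }

/-- The set `S` of all vectors `x` such that every chain starting with `x`
has decrease `0` with respect to `f`. -/
def startSet {n : ℕ} (f : (Fin n → Bool) → Bool) : Set (Fin n → Bool) :=
  { x | ∀ X : List (Fin n → Bool), IsChain X → X.head? = some x → decOn f X = 0 }

/-!
Every formula `C` satisfies `d_X(C) ≤ not(C)` on every chain `X`: monotone functions never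
decrease, a drop of `C ∧ D` or `C ∨ D` is a drop of `C` or of `D`, and the drops of `¬C` are
separated by drops of `C`. Conversely (Markov), let `S` be the up-set of points from which `f`
never decreases. Then `f = h ∧ (¬s ∨ r)` with `s` the indicator of `S`, `r` the monotone hull of
`f` on `S`, and `h = f ∨ s`; every drop of `h` is a drop of `f` whose end leaves `S`, so a chain
on which `h` drops `k > 0` times extends to one on which `f` drops `k + 1` times. Induction on
`d(f)` then spends one NOT on `s`.
-/

section

variable {n : ℕ}

section Decrease

lemma decOn_cons_cons (f : (Fin n → Bool) → Bool) (a b : Fin n → Bool) (t : List (Fin n → Bool)) :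
    decOn f (a :: b :: t) = (if f a = true ∧ f b = false then 1 else 0) + decOn f (b :: t) :=
  rfl

lemma decOn_le_decOn_cons (f : (Fin n → Bool) → Bool) (a : Fin n → Bool) :
    ∀ t : List (Fin n → Bool), decOn f t ≤ decOn f (a :: t)
  | [] => le_rfl
  | _ :: _ => by rw [decOn_cons_cons]; omega

lemma decOn_le_length (f : (Fin n → Bool) → Bool) : ∀ X : List (Fin n → Bool), decOn f X ≤ X.length
  | [] | [_] => by simp [decOn]
  | a :: b :: t => by
    have := decOn_le_length f (b :: t)
    rw [decOn_cons_cons]; simp only [List.length_cons] at *; split <;> omega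

lemma IsChain.nodup {X : List (Fin n → Bool)} (hX : IsChain X) : X.Nodup :=
  (List.isChain_iff_pairwise.mp hX).nodup

lemma decOn_le_card (f : (Fin n → Bool) → Bool) {X : List (Fin n → Bool)} (hX : IsChain X) :
    decOn f X ≤ Fintype.card (Fin n → Bool) :=
  (decOn_le_length f X).trans hX.nodup.length_le_card

lemma decOn_le_dec (f : (Fin n → Bool) → Bool) {X : List (Fin n → Bool)} (hX : IsChain X) :
    decOn f X ≤ dec f :=
  le_csSup ⟨_, by rintro _ ⟨Y, hY, rfl⟩; exact decOn_le_card f hY⟩ ⟨X, hX, rfl⟩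

lemma dec_le {f : (Fin n → Bool) → Bool} {k : ℕ} (h : ∀ X, IsChain X → decOn f X ≤ k) :
    dec f ≤ k :=
  csSup_le ⟨0, [], List.isChain_nil, rfl⟩ (by rintro _ ⟨X, hX, rfl⟩; exact h X hX)

lemma decOn_eq_zero_of_monotone {g : (Fin n → Bool) → Bool} (hg : Monotone g) :
    ∀ {X : List (Fin n → Bool)}, IsChain X → decOn g X = 0
  | [], _ | [_], _ => rfl
  | a :: b :: t, hX => by
    obtain ⟨hab, hbt⟩ := List.isChain_cons_cons.mp hX
    have hgab := Bool.le_iff_imp.mp (hg hab.le)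
    rw [decOn_cons_cons, decOn_eq_zero_of_monotone hg hbt, if_neg (by grind)]

lemma monotone_of_decOn_eq_zero {g : (Fin n → Bool) → Bool}
    (hg : ∀ X, IsChain X → decOn g X = 0) : Monotone g := by
  intro x y hxy
  rcases hxy.eq_or_lt with rfl | hlt
  · exact le_rfl
  · have := hg [x, y] (List.isChain_pair.mpr hlt)
    rw [decOn_cons_cons] at this
    cases hx : g x <;> cases hy : g y <;> simp_all

lemma decOn_le_add {f g h : (Fin n → Bool) → Bool}
    (hdrop : ∀ a b, f a = true → f b = false →
      (g a = true ∧ g b = false) ∨ (h a = true ∧ h b = false)) :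
    ∀ X, decOn f X ≤ decOn g X + decOn h X
  | [] | [_] => le_rfl
  | a :: b :: t => by
    have := decOn_le_add hdrop (b :: t)
    have := hdrop a b
    simp only [decOn_cons_cons]
    split_ifs <;> grind

/-- The drops of `!g` are the rises of `g`, and between two rises of `g` lies a drop of `g`. -/
lemma decOn_not_add_toNat_le (g : (Fin n → Bool) → Bool) :
    ∀ (a : Fin n → Bool) (t : List (Fin n → Bool)),
      decOn (fun x => !g x) (a :: t) + (g a).toNat ≤ decOn g (a :: t) + 1
  | a, [] => by cases g a <;> simp [decOn]
  | a, b :: t => by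
    have := decOn_not_add_toNat_le g b t
    simp only [decOn_cons_cons] at *
    cases g a <;> cases hb : g b <;> simp [hb] at this ⊢ <;> omega

lemma decOn_not_le (g : (Fin n → Bool) → Bool) :
    ∀ X, decOn (fun x => !g x) X ≤ decOn g X + 1
  | [] => Nat.zero_le _
  | a :: t => by have := decOn_not_add_toNat_le g a t; omega

end Decrease

namespace Formula

lemma decOn_eval_le_notCount (C : Formula n) {X : List (Fin n → Bool)} (hX : IsChain X) :
    decOn (C.eval ·) X ≤ C.notCount := by
  induction C with
  | var i => exact (decOn_eq_zero_of_monotone (g := ((var i).eval ·)) (fun _ _ h => h i) hX).le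
  | const b => exact (decOn_eq_zero_of_monotone (g := ((const b).eval ·)) monotone_const hX).le
  | and C D ihC ihD =>
    have := decOn_le_add (f := ((C.and D).eval ·)) (g := (C.eval ·)) (h := (D.eval ·))
      (by intro a b; simp only [eval]; grind) X
    simp only [notCount]; omega
  | or C D ihC ihD =>
    have := decOn_le_add (f := ((C.or D).eval ·)) (g := (C.eval ·)) (h := (D.eval ·))
      (by intro a b; simp only [eval]; grind) X
    simp only [notCount]; omega
  | not C ihC =>
    have := decOn_not_le (C.eval ·) X
    show decOn (fun x => !C.eval x) X ≤ C.notCount + 1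
    omega

lemma dec_le_notCount {f : (Fin n → Bool) → Bool} {C : Formula n} (hC : C.Computes f) :
    dec f ≤ C.notCount :=
  dec_le fun _ hX => funext hC ▸ C.decOn_eval_le_notCount hX

def disj (l : List (Formula n)) : Formula n := l.foldr or (const false)

def conj (l : List (Formula n)) : Formula n := l.foldr and (const true)

@[simp]
lemma eval_disj (x : Fin n → Bool) (l : List (Formula n)) : (disj l).eval x = l.any (·.eval x) := by
  induction l <;> simp_all [disj, eval]

@[simp]
lemma eval_conj (x : Fin n → Bool) (l : List (Formula n)) : (conj l).eval x = l.all (·.eval x) := by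
  induction l <;> simp_all [conj, eval]

@[simp]
lemma notCount_disj (l : List (Formula n)) : (disj l).notCount = (l.map notCount).sum := by
  induction l <;> simp_all [disj, notCount]

@[simp]
lemma notCount_conj (l : List (Formula n)) : (conj l).notCount = (l.map notCount).sum := by
  induction l <;> simp_all [conj, notCount]

def minterm (v : Fin n → Bool) : Formula n :=
  conj (((List.finRange n).filter (v ·)).map var)

@[simp]
lemma eval_minterm (v x : Fin n → Bool) : (minterm v).eval x = decide (v ≤ x) := by
  rw [Bool.eq_iff_iff]
  simp [minterm, eval, Pi.le_def, Bool.le_iff_imp, imp_iff_not_or]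

@[simp]
lemma notCount_minterm (v : Fin n → Bool) : (minterm v).notCount = 0 := by
  simp [minterm, Function.comp_def, notCount]

noncomputable def monotoneDNF (g : (Fin n → Bool) → Bool) : Formula n :=
  disj ((Finset.univ.filter (g · = true)).toList.map minterm)

lemma notCount_monotoneDNF (g : (Fin n → Bool) → Bool) : (monotoneDNF g).notCount = 0 := by
  simp [monotoneDNF, Function.comp_def]

lemma computes_monotoneDNF {g : (Fin n → Bool) → Bool} (hg : Monotone g) :
    (monotoneDNF g).Computes g := by
  intro x
  rw [Bool.eq_iff_iff]
  simp only [monotoneDNF, eval_disj, List.any_map, List.any_eq_true, Finset.mem_toList,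
    Finset.mem_filter, Finset.mem_univ, true_and, Function.comp_apply, eval_minterm,
    decide_eq_true_eq]
  exact ⟨fun ⟨v, hv, hvx⟩ => Bool.le_iff_imp.mp (hg hvx) hv, fun hx => ⟨x, hx, le_rfl⟩⟩

end Formula

section Markov

variable (f : (Fin n → Bool) → Bool)

lemma mem_startSet_iff {x : Fin n → Bool} :
    x ∈ startSet f ↔ ∀ t, IsChain (x :: t) → decOn f (x :: t) = 0 := by
  refine ⟨fun h t ht => h _ ht rfl, fun h X hX hx => ?_⟩
  obtain ⟨t, rfl⟩ : ∃ t, X = x :: t := List.head?_eq_some_iff.mp hx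
  exact h t hX

lemma isUpperSet_startSet : IsUpperSet (startSet f) := by
  intro x y hxy hx
  rcases hxy.eq_or_lt with rfl | hlt
  · exact hx
  rw [mem_startSet_iff] at hx ⊢
  intro t ht
  have := hx (y :: t) (List.isChain_cons_cons.mpr ⟨hlt, ht⟩)
  have := decOn_le_decOn_cons f x (y :: t)
  omega

lemma apply_eq_true_of_mem_startSet {z x : Fin n → Bool} (hz : z ∈ startSet f) (hzx : z ≤ x)
    (hfz : f z = true) : f x = true := by
  rcases hzx.eq_or_lt with rfl | hlt
  · exact hfz
  have := (mem_startSet_iff f).mp hz [x] (List.isChain_pair.mpr hlt)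
  rw [decOn_cons_cons, hfz] at this
  cases hfx : f x <;> simp_all

noncomputable def startInd (x : Fin n → Bool) : Bool := decide (x ∈ startSet f)

noncomputable def startHull (x : Fin n → Bool) : Bool :=
  decide (∃ z ∈ startSet f, z ≤ x ∧ f z = true)

noncomputable def fillStart (x : Fin n → Bool) : Bool := f x || startInd f x

lemma monotone_startInd : Monotone (startInd f) := fun _ _ hxy =>
  Bool.le_iff_imp.mpr fun hx => by
    simp only [startInd, decide_eq_true_eq] at hx ⊢
    exact isUpperSet_startSet f hxy hx

lemma monotone_startHull : Monotone (startHull f) := fun _ _ hxy =>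
  Bool.le_iff_imp.mpr fun hx => by
    simp only [startHull, decide_eq_true_eq] at hx ⊢
    obtain ⟨z, hz, hzx, hfz⟩ := hx
    exact ⟨z, hz, hzx.trans hxy, hfz⟩

lemma fillStart_and_not_startInd_or_startHull (x : Fin n → Bool) :
    (fillStart f x && (!startInd f x || startHull f x)) = f x := by
  by_cases hx : x ∈ startSet f
  · have : startHull f x = f x := by
      rw [Bool.eq_iff_iff]
      simp only [startHull, decide_eq_true_eq]
      exact ⟨fun ⟨z, hz, hzx, hfz⟩ => apply_eq_true_of_mem_startSet f hz hzx hfz,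
        fun hfx => ⟨x, hx, le_rfl, hfx⟩⟩
    simp [fillStart, startInd, hx, this]
  · simp [fillStart, startInd, hx]

lemma drop_of_fillStart_drop {a b : Fin n → Bool} (hab : a < b) (ha : fillStart f a = true)
    (hb : fillStart f b = false) : f a = true ∧ f b = false ∧ b ∉ startSet f := by
  have hbS : b ∉ startSet f := by simp_all [fillStart, startInd]
  have haS : a ∉ startSet f := fun h => hbS (isUpperSet_startSet f hab.le h)
  simp_all [fillStart, startInd]

/-- The last drop of `fillStart f` ends outside the start set, so the chain can be continued by
one more drop of `f`. -/
lemma exists_chain_decOn_fillStart_lt :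
    ∀ (a : Fin n → Bool) (t : List (Fin n → Bool)), IsChain (a :: t) →
      decOn (fillStart f) (a :: t) ≠ 0 →
      ∃ u, IsChain (a :: u) ∧ decOn (fillStart f) (a :: t) < decOn f (a :: u)
  | a, [], _, h0 => absurd rfl h0
  | a, b :: t, hc, h0 => by
    obtain ⟨hab, hbt⟩ := List.isChain_cons_cons.mp hc
    suffices ∃ u, IsChain (b :: u) ∧ decOn (fillStart f) (a :: b :: t) < decOn f (a :: b :: u) by
      obtain ⟨u, hu, hlt⟩ := this
      exact ⟨b :: u, List.isChain_cons_cons.mpr ⟨hab, hu⟩, hlt⟩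
    rw [decOn_cons_cons] at h0 ⊢
    by_cases hdrop : fillStart f a = true ∧ fillStart f b = false
    · obtain ⟨hfa, hfb, hbS⟩ := drop_of_fillStart_drop f hab hdrop.1 hdrop.2
      have hf_cons (u : List (Fin n → Bool)) : decOn f (a :: b :: u) = 1 + decOn f (b :: u) := by
        rw [decOn_cons_cons, if_pos ⟨hfa, hfb⟩]
      simp only [if_pos hdrop, hf_cons]
      by_cases hbt0 : decOn (fillStart f) (b :: t) = 0
      · obtain ⟨u, hu, hfu⟩ : ∃ u, IsChain (b :: u) ∧ decOn f (b :: u) ≠ 0 := by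
          simpa [mem_startSet_iff] using hbS
        exact ⟨u, hu, by omega⟩
      · obtain ⟨u, hu, hlt⟩ := exists_chain_decOn_fillStart_lt b t hbt hbt0
        exact ⟨u, hu, by omega⟩
    · rw [if_neg hdrop] at h0 ⊢
      obtain ⟨u, hu, hlt⟩ := exists_chain_decOn_fillStart_lt b t hbt (by omega)
      exact ⟨u, hu, by have := decOn_le_decOn_cons f a (b :: u); omega⟩

lemma decOn_fillStart_le {d : ℕ} (hf : ∀ X, IsChain X → decOn f X ≤ d + 1) :
    ∀ X, IsChain X → decOn (fillStart f) X ≤ d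
  | [], _ => Nat.zero_le d
  | a :: t, hX => by
    by_cases h0 : decOn (fillStart f) (a :: t) = 0
    · omega
    obtain ⟨u, hu, hlt⟩ := exists_chain_decOn_fillStart_lt f a t hX h0
    have := hf _ hu
    omega

end Markov

lemma exists_formula_notCount_le (d : ℕ) :
    ∀ f : (Fin n → Bool) → Bool, (∀ X, IsChain X → decOn f X ≤ d) →
      ∃ C : Formula n, C.Computes f ∧ C.notCount ≤ d := by
  induction d with
  | zero =>
    intro f hf
    refine ⟨Formula.monotoneDNF f, Formula.computes_monotoneDNF ?_, ?_⟩
    · exact monotone_of_decOn_eq_zero fun X hX => Nat.le_zero.mp (hf X hX)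
    · rw [Formula.notCount_monotoneDNF]
  | succ d ih =>
    intro f hf
    obtain ⟨C, hC, hCd⟩ := ih (fillStart f) (decOn_fillStart_le f hf)
    let s := Formula.monotoneDNF (startInd f)
    let r := Formula.monotoneDNF (startHull f)
    refine ⟨C.and (s.not.or r), fun x => ?_, ?_⟩
    · simp only [Formula.eval, hC x, s, r, Formula.computes_monotoneDNF (monotone_startInd f) x,
        Formula.computes_monotoneDNF (monotone_startHull f) x]
      exact fillStart_and_not_startInd_or_startHull f x
    · simp only [Formula.notCount, s, r, Formula.notCount_monotoneDNF]
      omega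

lemma invFormula_le {f : (Fin n → Bool) → Bool} {C : Formula n} (hC : C.Computes f) :
    invFormula f ≤ C.notCount :=
  Nat.sInf_le (s := {k | ∃ C : Formula n, C.Computes f ∧ C.notCount = k}) ⟨C, hC, rfl⟩

lemma exists_notCount_eq_invFormula {f : (Fin n → Bool) → Bool} {C : Formula n}
    (hC : C.Computes f) : ∃ C₀ : Formula n, C₀.Computes f ∧ C₀.notCount = invFormula f :=
  Nat.sInf_mem (s := {k | ∃ C : Formula n, C.Computes f ∧ C.notCount = k}) ⟨_, C, hC, rfl⟩

end

/-- The inversion complexity of every Boolean function `f` in formulas equals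
the decrease `d(f)` of `f`. -/
theorem inversion_complexity_in_formulas (n : ℕ) (f : (Fin n → Bool) → Bool) :
    invFormula f = dec f := by
  obtain ⟨C, hC, hCle⟩ := exists_formula_notCount_le (dec f) f fun _ hX => decOn_le_dec f hX
  obtain ⟨C₀, hC₀, hC₀k⟩ := exists_notCount_eq_invFormula hC
  exact le_antisymm ((invFormula_le hC).trans hCle) (hC₀k ▸ Formula.dec_le_notCount hC₀)

end InversionComplexity
end

section
/- Let C be a Boolean formula computing a Boolean function f : {0,1}^n → {0,1}, and let x, x' ∈ {0,1}^n with x < x', f(x) = 1 and f(x') = 0. Then not_d(C, x') − not_d(C, x) ≥ 1, where not_d(C, y) is the number of NOT nodes of C whose state is down on input y. -/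
namespace InversionComplexity

open Classical

def fall (a b : Bool) : ℕ :=
  if a = true ∧ b = false then 1 else 0

lemma fall_eq_zero_of_le {a b : Bool} (h : a ≤ b) : fall a b = 0 := by
  revert a b; decide

lemma fall_and_le (a b a' b' : Bool) : fall (a && b) (a' && b') ≤ fall a a' + fall b b' := by
  revert a b a' b'; decide

lemma fall_or_le (a b a' b' : Bool) : fall (a || b) (a' || b') ≤ fall a a' + fall b b' := by
  revert a b a' b'; decide

/-- The output of a NOT node falls exactly when the node enters the down state. -/
lemma down_add_fall_not (a a' : Bool) :
    (if a = true then 1 else 0) + fall (!a) (!a') = fall a a' + (if a' = true then 1 else 0) := by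
  revert a a'; decide

/-- Going up from `x` to `x'`, no NOT node leaves the down state, and every fall of the output
is paid for by a NOT node entering it. -/
theorem Formula.notDown_add_fall_le {n : ℕ} (C : Formula n) {x x' : Fin n → Bool}
    (hle : x ≤ x') : C.notDown x + fall (C.eval x) (C.eval x') ≤ C.notDown x' := by
  induction C with
  | var i => simp [Formula.notDown, Formula.eval, fall_eq_zero_of_le (hle i)]
  | const b => simp [Formula.notDown, Formula.eval, fall_eq_zero_of_le le_rfl]
  | and D E ihD ihE =>
    have := fall_and_le (D.eval x) (E.eval x) (D.eval x') (E.eval x')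
    simp only [Formula.notDown, Formula.eval]
    omega
  | or D E ihD ihE =>
    have := fall_or_le (D.eval x) (E.eval x) (D.eval x') (E.eval x')
    simp only [Formula.notDown, Formula.eval]
    omega
  | not D ih =>
    have := down_add_fall_not (D.eval x) (D.eval x')
    simp only [Formula.notDown, Formula.eval]
    omega

/-- If `x < x'`, `f x = 1` and `f x' = 0`, then the number of NOT nodes of a
formula `C` computing `f` in the down state increases by at least one, i.e.
`not_d(C, x') - not_d(C, x) ≥ 1`. -/
theorem notDown_increases (n : ℕ) (f : (Fin n → Bool) → Bool)
    (C : Formula n) (hC : C.Computes f) (x x' : Fin n → Bool)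
    (hlt : x < x') (h1 : f x = true) (h0 : f x' = false) :
    C.notDown x + 1 ≤ C.notDown x' := by
  have h := C.notDown_add_fall_le hlt.le
  rwa [hC x, hC x', h1, h0, fall, if_pos ⟨rfl, rfl⟩] at h

end InversionComplexity
end
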